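/- In the Burling construction, for every k ≥ 1 and every proper coloring φ of G_k, there exists a probe P of G_k such that φ uses at least k distinct colors on the vertices of P. -/

import Mathlib

/-- Probe index type for the Burling construction: level `n` corresponds to the graph
`G_{n+1}` of the paper. A probe of level `n + 1` is given by a probe `P` of the outer
copy, a probe `Q` of the inner copy placed in `P`, and a Boolean flag (`false` = lower
probe `P ∪ Q`, `true` = upper probe `P ∪ {d_{P,Q}}`). -/
def BurlingProbeIdx : ℕ → Type
  | 0 => Unit
  | n + 1 => BurlingProbeIdx n × BurlingProbeIdx n × Bool

/-- Vertex type of the Burling graph of level `n` (the graph `G_{n+1}` of the paper):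
level `n + 1` consists of an outer copy of level `n`, an inner copy of level `n` for
each probe `P`, and a diagonal vertex `d_{P,Q}` for each probe `P` of the outer copy
and each probe `Q` of the inner copy attached to `P`. -/
def BurlingVertex : ℕ → Type
  | 0 => Unit
  | n + 1 =>
      BurlingVertex n ⊕
        (BurlingProbeIdx n × BurlingVertex n) ⊕
        (BurlingProbeIdx n × BurlingProbeIdx n)

instance instFintypeBurlingProbeIdx : ∀ n, Fintype (BurlingProbeIdx n)
  | 0 => inferInstanceAs (Fintype Unit)
  | n + 1 =>
      letI := instFintypeBurlingProbeIdx n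
      inferInstanceAs (Fintype (BurlingProbeIdx n × BurlingProbeIdx n × Bool))

instance instFintypeBurlingVertex : ∀ n, Fintype (BurlingVertex n)
  | 0 => inferInstanceAs (Fintype Unit)
  | n + 1 =>
      letI := instFintypeBurlingVertex n
      inferInstanceAs (Fintype (BurlingVertex n ⊕
        (BurlingProbeIdx n × BurlingVertex n) ⊕
        (BurlingProbeIdx n × BurlingProbeIdx n)))

/-- The set of vertices pierced by a probe in the Burling construction. -/
def burlingProbe : (n : ℕ) → BurlingProbeIdx n → Set (BurlingVertex n)
  | 0, _ => Set.univ
  | n + 1, ⟨P, Q, b⟩ =>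
      (Sum.inl '' burlingProbe n P) ∪
        (if b then {Sum.inr (Sum.inr (P, Q))}
         else (fun v => Sum.inr (Sum.inl (P, v))) '' burlingProbe n Q)

/-- One-directional adjacency relation generating the Burling graph of level `n`. -/
def burlingRel : (n : ℕ) → BurlingVertex n → BurlingVertex n → Prop
  | 0, _, _ => False
  | n + 1, x, y =>
      match x, y with
      | Sum.inl u, Sum.inl v => burlingRel n u v
      | Sum.inr (Sum.inl (P, u)), Sum.inr (Sum.inl (P', v)) => P = P' ∧ burlingRel n u v
      | Sum.inr (Sum.inr (P, Q)), Sum.inr (Sum.inl (P', v)) => P = P' ∧ v ∈ burlingProbe n Q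
      | _, _ => False

/-- The Burling graph of level `n` (the graph `G_{n+1}` of the paper). -/
def BurlingGraph (n : ℕ) : SimpleGraph (BurlingVertex n) :=
  SimpleGraph.fromRel (burlingRel n)


/-!
Induction on the level. Color the outer copy of `G_k` and find a probe `P` seeing at least `k`
colors; then color the copy attached to `P` and find a probe `Q` there seeing at least `k` colors.
The diagonal vertex `d_{P,Q}` is adjacent to all of `Q`, so its color `c` is not among the colors
of `Q`. If `c` occurs on `P`, then `P ∪ Q` sees the colors of `Q` together with `c`; otherwise
`P ∪ {d_{P,Q}}` sees the colors of `P` together with `c`.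
-/

namespace Set

variable {α : Type*} {A B : Set α} {c : α}

theorem ncard_succ_le_union_or_insert (hA : A.Finite) (hB : B.Finite) (hcB : c ∉ B) :
    B.ncard + 1 ≤ (A ∪ B).ncard ∨ A.ncard + 1 ≤ (insert c A).ncard := by
  by_cases hcA : c ∈ A
  · left
    calc B.ncard + 1 = (insert c B).ncard := (ncard_insert_of_notMem hcB hB).symm
      _ ≤ (A ∪ B).ncard :=
        ncard_le_ncard (insert_subset (Or.inl hcA) subset_union_right) (hA.union hB)
  · exact Or.inr (ncard_insert_of_notMem hcA hA).ge

end Set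

namespace BurlingGraph

variable {n : ℕ}

def outerHom (n : ℕ) : BurlingGraph n →g BurlingGraph (n + 1) where
  toFun := Sum.inl
  map_rel' {u v} h := by
    rw [BurlingGraph, SimpleGraph.fromRel_adj] at h
    exact (SimpleGraph.fromRel_adj _ _ _).2 ⟨Sum.inl_injective.ne h.1, h.2⟩

def innerHom (P : BurlingProbeIdx n) : BurlingGraph n →g BurlingGraph (n + 1) where
  toFun v := Sum.inr (Sum.inl (P, v))
  map_rel' {u v} h := by
    rw [BurlingGraph, SimpleGraph.fromRel_adj] at h
    refine (SimpleGraph.fromRel_adj _ _ _).2 ⟨fun e => h.1 ?_, h.2.imp (⟨rfl, ·⟩) (⟨rfl, ·⟩)⟩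
    exact congrArg Prod.snd (Sum.inl_injective (Sum.inr_injective e))

/-- The vertex `d_{P,Q}` of the paper. -/
def diag (P Q : BurlingProbeIdx n) : BurlingVertex (n + 1) :=
  Sum.inr (Sum.inr (P, Q))

theorem adj_diag_inner (P Q : BurlingProbeIdx n) {v : BurlingVertex n}
    (hv : v ∈ burlingProbe n Q) :
    (BurlingGraph (n + 1)).Adj (diag P Q) (innerHom P v) :=
  (SimpleGraph.fromRel_adj _ _ _).2 ⟨by rintro ⟨⟩, Or.inl ⟨rfl, hv⟩⟩

theorem image_probe_lower {β : Type*} (f : BurlingVertex (n + 1) → β)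
    (P Q : BurlingProbeIdx n) :
    f '' burlingProbe (n + 1) (P, Q, false) =
      (f ∘ outerHom n) '' burlingProbe n P ∪ (f ∘ innerHom P) '' burlingProbe n Q := by
  rw [Set.image_comp, Set.image_comp, ← Set.image_union]
  rfl

theorem image_probe_upper {β : Type*} (f : BurlingVertex (n + 1) → β)
    (P Q : BurlingProbeIdx n) :
    f '' burlingProbe (n + 1) (P, Q, true) =
      insert (f (diag P Q)) ((f ∘ outerHom n) '' burlingProbe n P) := by
  change f '' (Sum.inl '' burlingProbe n P ∪ {diag P Q}) = _
  rw [Set.image_union, Set.image_singleton, Set.union_singleton, Set.image_comp]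
  rfl

end BurlingGraph

open BurlingGraph in
theorem burlingGraph_coloring_probe (n : ℕ) (α : Type)
    (C : (BurlingGraph n).Coloring α) :
    ∃ i : BurlingProbeIdx n, n + 1 ≤ (C '' burlingProbe n i).ncard := by
  induction n with
  | zero => exact ⟨(), (Set.ncard_pos (Set.toFinite _)).2 ⟨C (), (), trivial, rfl⟩⟩
  | succ n ih =>
    obtain ⟨P, hP⟩ := ih (C.comp (outerHom n))
    obtain ⟨Q, hQ⟩ := ih (C.comp (innerHom P))
    rw [SimpleGraph.Hom.coe_comp] at hP hQ
    have hdiag : C (diag P Q) ∉ (C ∘ innerHom P) '' burlingProbe n Q := by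
      rintro ⟨v, hv, hc⟩
      exact C.valid (adj_diag_inner P Q hv) hc.symm
    rcases Set.ncard_succ_le_union_or_insert (A := (C ∘ outerHom n) '' burlingProbe n P)
      (Set.toFinite _) (Set.toFinite _) hdiag with h | h
    · exact ⟨(P, Q, false), image_probe_lower C P Q ▸ (Nat.succ_le_succ hQ).trans h⟩
    · exact ⟨(P, Q, true), image_probe_upper C P Q ▸ (Nat.succ_le_succ hP).trans h⟩
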